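/- arXiv:1906.00907 — 2 statements merged into one kernel-verified Lean document; each statement's English description precedes it below -/
import Mathlib

section
/- Let n be a positive even integer and z ∈ I^FPF_n. Let {𝔊^Sp_y}_{y ∈ I^FPF_n} ⊆ ℤ[β][x_1,…,x_n] and {𝔊^Sp_y}_{y ∈ I^FPF_{n+2}} ⊆ ℤ[β][x_1,…,x_{n+2}] be the respective unique families of symplectic Grothendieck polynomials. Then, under the natural inclusion ℤ[β][x_1,…,x_n] ⊆ ℤ[β][x_1,…,x_{n+2}], 𝔊^Sp_{z×21} = 𝔊^Sp_z. -/
open MvPolynomial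

noncomputable section

/-- The coefficient ring `ℤ[β]`. -/
abbrev Rb : Type := Polynomial ℤ

/-- The indeterminate `β`. -/
def bb : Rb := Polynomial.X

/-- The order-reversing permutation `n⋯321`, i.e. `i ↦ n+1-i` in 1-indexed notation. -/
def revPerm (n : ℕ) : Equiv.Perm (Fin n) :=
  ⟨Fin.rev, Fin.rev, fun i => Fin.rev_rev i, fun i => Fin.rev_rev i⟩

/-- `z` is a fixed-point-free involution. -/
def IsFPF {n : ℕ} (z : Equiv.Perm (Fin n)) : Prop :=
  z * z = 1 ∧ ∀ i, z i ≠ i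

/-- `x_i + x_j + β x_i x_j`. -/
def oplus {n : ℕ} (i j : Fin n) : MvPolynomial (Fin n) Rb :=
  X i + X j + C bb * (X i * X j)

/-- `IsDivDiffB i j f g` encodes `∂_i^{(β)} f = g` where `j = i+1`:
`∂_i^{(β)} f = ((1+βx_j) f - s_i((1+βx_j) f)) / (x_i - x_j)`, stated multiplicatively
(the quotient is exact, and `g` is uniquely determined since the ring is a domain). -/
def IsDivDiffB {n : ℕ} (i j : Fin n) (f g : MvPolynomial (Fin n) Rb) : Prop :=
  (X i - X j) * g =
    (1 + C bb * X j) * f - rename ⇑(Equiv.swap i j) ((1 + C bb * X j) * f)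

/-- `∏_{1 ≤ i < j ≤ n-i} (x_i + x_j + β x_i x_j)` (variables 0-indexed). -/
def spTop (n : ℕ) : MvPolynomial (Fin n) Rb :=
  ∏ p ∈ Finset.univ.filter
      (fun p : Fin n × Fin n => p.1 < p.2 ∧ (p.1 : ℕ) + (p.2 : ℕ) + 2 ≤ n),
    oplus p.1 p.2

/-- `x_1^{n-1} x_2^{n-2} ⋯ x_{n-1}^1` (variables 0-indexed). -/
def grTop (n : ℕ) : MvPolynomial (Fin n) Rb :=
  ∏ a : Fin n, X a ^ (n - 1 - (a : ℕ))

/-- The defining property of the family of symplectic Grothendieck polynomials. -/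
def IsSpFam (n : ℕ) (G : Equiv.Perm (Fin n) → MvPolynomial (Fin n) Rb) : Prop :=
  G (revPerm n) = spTop n ∧
    ∀ z : Equiv.Perm (Fin n), IsFPF z →
      ∀ i j : Fin n, (j : ℕ) = (i : ℕ) + 1 →
        z i ≠ j → z j ≠ i → z j < z i →
          IsDivDiffB i j (G z) (G (Equiv.swap i j * z * Equiv.swap i j))

/-- The defining property of the family of Grothendieck polynomials. -/
def IsGrothFam (n : ℕ) (G : Equiv.Perm (Fin n) → MvPolynomial (Fin n) Rb) : Prop :=
  G (revPerm n) = grTop n ∧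
    ∀ (w : Equiv.Perm (Fin n)) (i j : Fin n), (j : ℕ) = (i : ℕ) + 1 →
      w j < w i → IsDivDiffB i j (G w) (G (w * Equiv.swap i j))

/-- The length (number of inversions) of a permutation. -/
def invLen {n : ℕ} (w : Equiv.Perm (Fin n)) : ℕ :=
  (Finset.univ.filter (fun p : Fin n × Fin n => p.1 < p.2 ∧ w p.2 < w p.1)).card

/-- The fixed-point-free involution length `ℓ_fpf(z) = #{(i,j) : z(i) > z(j) < i < j}`. -/
def fpfLen {n : ℕ} (z : Equiv.Perm (Fin n)) : ℕ :=
  (Finset.univ.filter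
      (fun p : Fin n × Fin n => z p.2 < z p.1 ∧ z p.2 < p.1 ∧ p.1 < p.2)).card

/-- The underlying function of `Θ = (1,2)(3,4)⋯(n-1,n)`. -/
def thetaFun (n : ℕ) (hn : n % 2 = 0) (i : Fin n) : Fin n :=
  ⟨if (i : ℕ) % 2 = 0 then (i : ℕ) + 1 else (i : ℕ) - 1, by
    have hi := i.isLt
    split_ifs with h <;> omega⟩

/-- The fixed-point-free involution `Θ = (1,2)(3,4)⋯(n-1,n)`. -/
def theta (n : ℕ) (hn : n % 2 = 0) : Equiv.Perm (Fin n) :=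
  Function.Involutive.toPerm (thetaFun n hn) (by
    intro i
    have hi := i.isLt
    apply Fin.ext
    simp only [thetaFun]
    split_ifs <;> omega)

/-- One step of the partial Hecke action: `heckeStep a z = some (z · s_{a+1})` when defined,
with `a` a 0-indexed letter (so `a` corresponds to the simple transposition of `a+1, a+2`
in 1-indexed notation). -/
def heckeStep {n : ℕ} (a : ℕ) (z : Equiv.Perm (Fin n)) : Option (Equiv.Perm (Fin n)) :=
  if h : a + 1 < n then
    let i : Fin n := ⟨a, Nat.lt_of_succ_lt h⟩
    let j : Fin n := ⟨a + 1, h⟩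
    if z i < z j then some (Equiv.swap i j * z * Equiv.swap i j)
    else if z i = j ∧ z j = i then none
    else if z i ≠ j ∧ z j ≠ i ∧ z j < z i then some z
    else none
  else none

/-- Apply a word of (0-indexed) letters to `z` via the partial Hecke action. -/
def heckeApply {n : ℕ} (l : List ℕ) (z : Equiv.Perm (Fin n)) :
    Option (Equiv.Perm (Fin n)) :=
  l.foldl (fun o a => o.bind (heckeStep a)) (some z)

/-- The simple transposition corresponding to the 0-indexed letter `a`. -/
def swapAt (n : ℕ) (a : ℕ) : Equiv.Perm (Fin n) :=
  if h : a + 1 < n then Equiv.swap ⟨a, Nat.lt_of_succ_lt h⟩ ⟨a + 1, h⟩ else 1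

/-- The permutation `s_{i_1} s_{i_2} ⋯ s_{i_l}` of a word. -/
def wordToPerm (n : ℕ) (l : List ℕ) : Equiv.Perm (Fin n) := (l.map (swapAt n)).prod

/-- `l` is a reduced word for `w`. -/
def IsReducedWord (n : ℕ) (w : Equiv.Perm (Fin n)) (l : List ℕ) : Prop :=
  (∀ a ∈ l, a + 1 < n) ∧ wordToPerm n l = w ∧ l.length = invLen w

/-- The set of Hecke atoms `B_fpf(z)`. -/
def Bfpf (n : ℕ) (hn : n % 2 = 0) (z : Equiv.Perm (Fin n)) :
    Finset (Equiv.Perm (Fin n)) :=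
  @Finset.filter _
    (fun w => ∃ l : List ℕ, IsReducedWord n w l ∧ heckeApply l (theta n hn) = some z)
    (Classical.decPred _) Finset.univ

/-- `extPerm z w` is the permutation `z × w` acting on the first `m` letters by `z`
and the last `n` letters by `w`. -/
def extPerm {m n : ℕ} (z : Equiv.Perm (Fin m)) (w : Equiv.Perm (Fin n)) :
    Equiv.Perm (Fin (m + n)) :=
  finSumFinEquiv.symm.trans ((Equiv.sumCongr z w).trans finSumFinEquiv)

/-- `rank(z_{[i][j]}) = #{k ∈ [j] : z(k) ≤ i}` (1-indexed sizes `i, j`). -/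
def permRank {n : ℕ} (z : Equiv.Perm (Fin n)) (i j : ℕ) : ℕ :=
  (Finset.univ.filter (fun k : Fin n => (k : ℕ) < j ∧ ((z k : Fin n) : ℕ) < i)).card

/-- The rank of the upper-left `i × j` corner of `A` (1-indexed sizes `i, j ≤ n`). -/
def cornerRank {n : ℕ} (A : Matrix (Fin n) (Fin n) ℂ) (i j : ℕ) : ℕ :=
  Matrix.rank (Matrix.of fun (a : Fin (min i n)) (b : Fin (min j n)) =>
    A ⟨(a : ℕ), lt_of_lt_of_le a.isLt (min_le_right i n)⟩
      ⟨(b : ℕ), lt_of_lt_of_le b.isLt (min_le_right j n)⟩)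

/-- The orthogonal Rothe diagram `D^O(z) = {(i, z(j)) : z(i) > z(j) ≤ i < j}` (0-indexed). -/
def DO (n : ℕ) (z : Equiv.Perm (Fin n)) : Finset (Fin n × Fin n) :=
  Finset.image (fun p : Fin n × Fin n => (p.1, z p.2))
    (Finset.univ.filter (fun p : Fin n × Fin n => z p.2 < z p.1 ∧ z p.2 ≤ p.1 ∧ p.1 < p.2))

/-- The symplectic Rothe diagram `D^Sp(z) = {(i, z(j)) : z(i) > z(j) < i < j}` (0-indexed). -/
def DSp (n : ℕ) (z : Equiv.Perm (Fin n)) : Finset (Fin n × Fin n) :=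
  Finset.image (fun p : Fin n × Fin n => (p.1, z p.2))
    (Finset.univ.filter (fun p : Fin n × Fin n => z p.2 < z p.1 ∧ z p.2 < p.1 ∧ p.1 < p.2))

/-- The essential set `Ess(D) = {(i,j) ∈ D : (i,j+1) ∉ D and (i+1,j) ∉ D}`. -/
def Ess {n : ℕ} (D : Finset (Fin n × Fin n)) : Finset (Fin n × Fin n) :=
  D.filter (fun p =>
    (∀ q ∈ D, ¬(q.1 = p.1 ∧ (q.2 : ℕ) = (p.2 : ℕ) + 1)) ∧
    (∀ q ∈ D, ¬((q.1 : ℕ) = (p.1 : ℕ) + 1 ∧ q.2 = p.2)))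

/-- A permutation is vexillary if it avoids the pattern 2143. -/
def Vexillary {n : ℕ} (z : Equiv.Perm (Fin n)) : Prop :=
  ¬ ∃ i j k l : Fin n, i < j ∧ j < k ∧ k < l ∧ z j < z i ∧ z i < z l ∧ z l < z k

/-- The ideal of `ℤ[x_1,…,x_N]` generated by symmetric polynomials with zero constant term. -/
def ILambda (N : ℕ) : Ideal (MvPolynomial (Fin N) ℤ) :=
  Ideal.span {f : MvPolynomial (Fin N) ℤ |
    (∀ σ : Equiv.Perm (Fin N), rename (⇑σ) f = f) ∧ coeff 0 f = 0}

/-- Substitute `x_j = 0` for all `j > n`, producing a polynomial in `x_1,…,x_n`. -/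
def truncVars (n N : ℕ) (f : MvPolynomial (Fin N) Rb) : MvPolynomial (Fin n) Rb :=
  aeval (fun i : Fin N => if h : (i : ℕ) < n then X ⟨(i : ℕ), h⟩ else 0) f

/-- The order used to list the elements of a pipe-dream subset `S`:
rows weakly increasing, columns strictly decreasing within a row. -/
def rowOrder {n : ℕ} (p q : Fin n × Fin n) : Prop :=
  p.1 < q.1 ∨ (p.1 = q.1 ∧ q.2 < p.2)

/-- `δ(S)` is a symplectic Hecke word for `z` (with Hecke words computed from `Θ`);
here `L` is the listing of `S` in the order `rowOrder`, and `(a,b) ∈ S` (0-indexed)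
contributes the 0-indexed letter `a + b`, i.e. the 1-indexed letter `(b+1)+(a+1)-1`. -/
def DeltaHeckeWord (n : ℕ) (hn : n % 2 = 0) (z : Equiv.Perm (Fin n))
    (S : Finset (Fin n × Fin n)) : Prop :=
  ∃ L : List (Fin n × Fin n), L.toFinset = S ∧ L.Chain' rowOrder ∧
    heckeApply (L.map (fun p => (p.1 : ℕ) + (p.2 : ℕ))) (theta n hn) = some z

/-!
Both sides obey the same divided-difference recursion in the first `n` variables: conjugating
`z` by `s_i` with `i + 1 < n` commutes with `· × 21`, and `∂_i^{(β)}` commutes with the inclusion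
of variables. Every `z ∈ I^FPF_n` is reached from `n⋯321` by such steps, so it suffices to treat
`z = n⋯321`. For that, conjugate `w_0 = (n+2)⋯321` successively by `s_1, …, s_n`, ending at
`(n⋯321) × 21`. Each step strips one factor `x_c ⊕ x_k` off `𝔊^Sp_{w_0}`: the remaining
product is symmetric in `x_k, x_{k+1}` and `∂_k^{(β)} (x_c ⊕ x_k) = 1`. What is left at the end
is `∏_{i < j ≤ n - i} (x_i ⊕ x_j) = 𝔊^Sp_{n⋯321}`.
-/

open Equiv

section DividedDifference

variable {N : ℕ}

lemma oplus_comm (i j : Fin N) : oplus i j = oplus j i := by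
  unfold oplus; ring

lemma rename_oplus {M : ℕ} (f : Fin N → Fin M) (i j : Fin N) :
    rename f (oplus i j) = oplus (f i) (f j) := by
  simp [oplus]

lemma IsDivDiffB.unique {i j : Fin N} (hij : i ≠ j) {f g g' : MvPolynomial (Fin N) Rb}
    (h : IsDivDiffB i j f g) (h' : IsDivDiffB i j f g') : g = g' :=
  mul_left_cancel₀ (sub_ne_zero_of_ne ((X_injective (σ := Fin N) (R := Rb)).ne hij))
    (h.trans h'.symm)

lemma IsDivDiffB.rename {M : ℕ} {e : Fin N → Fin M} (he : Function.Injective e) {i j : Fin N}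
    {f g : MvPolynomial (Fin N) Rb} (h : IsDivDiffB i j f g) :
    IsDivDiffB (e i) (e j) (MvPolynomial.rename e f) (MvPolynomial.rename e g) := by
  unfold IsDivDiffB at h ⊢
  have hmul : (1 + C bb * X (e j)) * MvPolynomial.rename e f =
      MvPolynomial.rename e ((1 + C bb * X j) * f) := by simp
  rw [hmul, rename_rename, he.swap_comp, ← rename_rename, ← map_sub, ← h]
  simp

/-- Since `M` is symmetric in `x_i, x_j`, this reduces to
`(1 + β x_j) (x_c ⊕ x_i) - (1 + β x_i) (x_c ⊕ x_j) = x_i - x_j`. -/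
lemma isDivDiffB_oplus_mul {i j c : Fin N} (hci : c ≠ i) (hcj : c ≠ j)
    {M : MvPolynomial (Fin N) Rb} (hM : rename (swap i j) M = M) :
    IsDivDiffB i j (oplus c i * M) M := by
  unfold IsDivDiffB
  simp only [map_mul, map_add, map_one, rename_X, rename_oplus, rename_C, hM,
    swap_apply_left, swap_apply_right, swap_apply_of_ne_of_ne hci hcj]
  unfold oplus
  ring

lemma val_swap_apply (i j x : Fin N) :
    (swap i j x : ℕ) = if (x : ℕ) = i then (j : ℕ) else if (x : ℕ) = j then (i : ℕ) else x := by
  simp only [swap_apply_def, Fin.ext_iff]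
  split_ifs <;> rfl

def sortedImage (σ : Perm (Fin N)) (p : Fin N × Fin N) : Fin N × Fin N :=
  if σ p.1 < σ p.2 then (σ p.1, σ p.2) else (σ p.2, σ p.1)

lemma sortedImage_sortedImage {σ : Perm (Fin N)} (hσ : Function.Involutive σ) {p : Fin N × Fin N}
    (hp : p.1 < p.2) : sortedImage σ (sortedImage σ p) = p := by
  unfold sortedImage
  by_cases h : σ p.1 < σ p.2
  · simp only [if_pos h, hσ _, if_pos hp]
  · simp only [if_neg h, hσ _, if_neg hp.not_gt]

lemma rename_prod_oplus_eq_self {σ : Perm (Fin N)} (hσ : Function.Involutive σ)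
    {S : Finset (Fin N × Fin N)} (hlt : ∀ p ∈ S, p.1 < p.2)
    (hS : ∀ p ∈ S, sortedImage σ p ∈ S) :
    rename σ (∏ p ∈ S, oplus p.1 p.2) = ∏ p ∈ S, oplus p.1 p.2 := by
  simp only [map_prod, rename_oplus]
  refine Finset.prod_bij' (fun p _ => sortedImage σ p) (fun p _ => sortedImage σ p) hS hS
    (fun p hp => sortedImage_sortedImage hσ (hlt p hp))
    (fun p hp => sortedImage_sortedImage hσ (hlt p hp)) fun p _ => ?_
  unfold sortedImage
  split_ifs
  · rfl
  · exact oplus_comm _ _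

end DividedDifference

section FixedPointFree

variable {n : ℕ} {z : Perm (Fin n)}

lemma IsFPF.apply_apply (hz : IsFPF z) (x : Fin n) : z (z x) = x :=
  congrArg (· x) hz.1

lemma IsFPF.conj (hz : IsFPF z) (σ : Perm (Fin n)) : IsFPF (σ⁻¹ * z * σ) := by
  refine ⟨?_, fun x hx => hz.2 (σ x) ?_⟩
  · rw [show σ⁻¹ * z * σ * (σ⁻¹ * z * σ) = σ⁻¹ * (z * z) * σ by group, hz.1]
    group
  · rwa [Perm.mul_apply, Perm.mul_apply, Perm.inv_eq_iff_eq] at hx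

lemma IsFPF.conj_swap (hz : IsFPF z) (i j : Fin n) : IsFPF (swap i j * z * swap i j) := by
  simpa using hz.conj (swap i j)

lemma isFPF_revPerm (hev : n % 2 = 0) : IsFPF (revPerm n) := by
  refine ⟨Perm.ext fun x => Fin.rev_rev x, fun x hx => ?_⟩
  have := congrArg Fin.val hx
  simp only [revPerm, coe_fn_mk, Fin.val_rev] at this
  omega

lemma IsFPF.ne_of_lt_of_apply_lt (hz : IsFPF z) {i j : Fin n} (hij : i < j)
    (h : z i < z j) : z i ≠ j ∧ z j ≠ i := by
  constructor
  · intro hi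
    have hj : z j = i := by rw [← hi, hz.apply_apply]
    exact absurd (hi ▸ hj ▸ h) hij.not_gt
  · intro hj
    have hi : z i = j := by rw [← hj, hz.apply_apply]
    exact absurd (hi ▸ hj ▸ h) hij.not_gt

end FixedPointFree


section DescentInduction

variable {n : ℕ}

lemma sum_sub_swap_mul (i j : Fin n) (g : Fin n → ℤ) :
    ∑ x : Fin n, ((x : ℤ) - (swap i j x : ℕ)) * g x = ((j : ℤ) - i) * (g j - g i) := by
  rcases eq_or_ne i j with rfl | hij
  · simp
  rw [Fintype.sum_eq_add i j hij fun x hx => by rw [swap_apply_of_ne_of_ne hx.1 hx.2, sub_self,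
    zero_mul], swap_apply_left, swap_apply_right]
  ring

/-- By the rearrangement inequality this is smallest at the reverse permutation. -/
def dotId (z : Perm (Fin n)) : ℕ := ∑ x : Fin n, (x : ℕ) * (z x : ℕ)

lemma dotId_conj_swap_lt {z : Perm (Fin n)} (hz : IsFPF z) {i j : Fin n} (hij : i < j)
    (h : z i < z j) : dotId (swap i j * z * swap i j) < dotId z := by
  obtain ⟨hzij, hzji⟩ := hz.ne_of_lt_of_apply_lt hij h
  have hzi : swap i j (z i) = z i := swap_apply_of_ne_of_ne (hz.2 i) hzij
  have hzj : swap i j (z j) = z j := swap_apply_of_ne_of_ne hzji (hz.2 j)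
  have hconj : (dotId (swap i j * z * swap i j) : ℤ) =
      ∑ x : Fin n, ((swap i j x : ℕ) : ℤ) * (swap i j (z x) : ℕ) := by
    rw [dotId, ← Equiv.sum_comp (swap i j)]
    push_cast
    simp
  have hsecond : ∑ x : Fin n, ((swap i j x : ℕ) : ℤ) * ((z x : ℕ) - (swap i j (z x) : ℕ)) =
      ((j : ℤ) - i) * (z j - z i) := by
    calc ∑ x : Fin n, ((swap i j x : ℕ) : ℤ) * ((z x : ℕ) - (swap i j (z x) : ℕ))
        = ∑ y : Fin n, ((y : ℤ) - (swap i j y : ℕ)) * (swap i j (z y) : ℕ) := by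
          rw [← Equiv.sum_comp z]
          exact Finset.sum_congr rfl fun y _ => by rw [hz.apply_apply]; ring
      _ = _ := by rw [sum_sub_swap_mul, hzi, hzj]
  have hdiff : (dotId z : ℤ) - dotId (swap i j * z * swap i j) =
      2 * ((j : ℤ) - i) * ((z j : ℤ) - z i) := by
    rw [hconj, dotId]
    push_cast
    rw [← Finset.sum_sub_distrib]
    calc ∑ x : Fin n, ((x : ℤ) * (z x : ℕ) - (swap i j x : ℕ) * (swap i j (z x) : ℕ))
        = ∑ x : Fin n, (((x : ℤ) - (swap i j x : ℕ)) * (z x : ℕ) +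
            ((swap i j x : ℕ) : ℤ) * ((z x : ℕ) - (swap i j (z x) : ℕ))) :=
          Finset.sum_congr rfl fun x _ => by ring
      _ = _ := by
          rw [Finset.sum_add_distrib, sum_sub_swap_mul i j, hsecond]
          ring
  have hji : (i : ℤ) < j := by exact_mod_cast hij
  have hzji' : (z i : ℤ) < z j := by exact_mod_cast h
  have hpos : (0 : ℤ) < 2 * ((j : ℤ) - i) * ((z j : ℤ) - z i) := by
    apply mul_pos <;> linarith
  omega

lemma eq_revPerm_of_forall_not_lt (z : Perm (Fin n))
    (h : ∀ i j : Fin n, (j : ℕ) = i + 1 → ¬ z i < z j) : z = revPerm n := by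
  rcases n with _ | m
  · exact Subsingleton.elim _ _
  have hanti : StrictAnti z := Fin.strictAnti_iff_succ_lt.mpr fun i =>
    lt_of_le_of_ne (not_lt.mp (h _ _ rfl)) (z.injective.ne Fin.castSucc_lt_succ.ne')
  have hrange : Set.range z = Set.range Fin.rev := by
    rw [z.surjective.range_eq, Fin.rev_surjective.range_eq]
  exact Equiv.ext (congrFun ((hanti.range_inj Fin.rev_strictAnti).mp hrange))

theorem IsFPF.induction_on_descents {P : Perm (Fin n) → Prop} (h_rev : P (revPerm n))
    (h_step : ∀ z, IsFPF z → ∀ i j : Fin n, (j : ℕ) = i + 1 → z i ≠ j → z j ≠ i → z j < z i →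
      P z → P (swap i j * z * swap i j))
    {z : Perm (Fin n)} (hz : IsFPF z) : P z := by
  induction hm : dotId z using Nat.strong_induction_on generalizing z with
  | _ m ih =>
    by_cases hasc : ∃ i j : Fin n, (j : ℕ) = i + 1 ∧ z i < z j
    · obtain ⟨i, j, hij, hlt⟩ := hasc
      have hij' : i < j := by rw [Fin.lt_def]; omega
      obtain ⟨hzij, hzji⟩ := hz.ne_of_lt_of_apply_lt hij' hlt
      have hz' := hz.conj_swap i j
      have hi' : (swap i j * z * swap i j) i = z j := by
        simp [Perm.mul_apply, swap_apply_of_ne_of_ne hzji (hz.2 j)]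
      have hj' : (swap i j * z * swap i j) j = z i := by
        simp [Perm.mul_apply, swap_apply_of_ne_of_ne (hz.2 i) hzij]
      have h' := ih _ (hm ▸ dotId_conj_swap_lt hz hij' hlt) hz' rfl
      have := h_step _ hz' i j hij (hi' ▸ hz.2 j) (hj' ▸ hz.2 i) (hi' ▸ hj' ▸ hlt) h'
      simpa [← mul_assoc] using this
    · push Not at hasc
      rw [eq_revPerm_of_forall_not_lt z fun i j hij => not_lt.mpr (hasc i j hij)]
      exact h_rev

end DescentInduction

section ExtPerm

variable {m l : ℕ}

lemma extPerm_eq_permCongrHom (z : Perm (Fin m)) (w : Perm (Fin l)) :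
    extPerm z w = finSumFinEquiv.permCongrHom (Perm.sumCongrHom _ _ (z, w)) :=
  rfl

lemma extPerm_mul (z z' : Perm (Fin m)) (w w' : Perm (Fin l)) :
    extPerm (z * z') (w * w') = extPerm z w * extPerm z' w' := by
  simp only [extPerm_eq_permCongrHom, ← map_mul, Prod.mk_mul_mk]

lemma extPerm_one : extPerm (1 : Perm (Fin m)) (1 : Perm (Fin l)) = 1 := by
  simp only [extPerm_eq_permCongrHom, ← Prod.one_eq_mk, map_one]

@[simp]
lemma extPerm_castAdd (z : Perm (Fin m)) (w : Perm (Fin l)) (a : Fin m) :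
    extPerm z w (Fin.castAdd l a) = Fin.castAdd l (z a) := by
  simp [extPerm]

@[simp]
lemma extPerm_natAdd (z : Perm (Fin m)) (w : Perm (Fin l)) (b : Fin l) :
    extPerm z w (Fin.natAdd m b) = Fin.natAdd m (w b) := by
  simp [extPerm]

lemma swap_castAdd (i j : Fin m) :
    swap (Fin.castAdd l i) (Fin.castAdd l j) = extPerm (swap i j) 1 := by
  ext x
  induction x using Fin.addCases with
  | left a => simp [(Fin.castAdd_injective m l).swap_apply]
  | right b =>
    have hne : ∀ a : Fin m, Fin.natAdd m b ≠ Fin.castAdd l a := fun a => by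
      simp only [ne_eq, Fin.ext_iff, Fin.val_natAdd, Fin.val_castAdd]; omega
    rw [swap_apply_of_ne_of_ne (hne i) (hne j)]
    simp

lemma swap_castAdd_mul_extPerm_mul_swap_castAdd (i j : Fin m) (z : Perm (Fin m))
    (w : Perm (Fin l)) :
    swap (Fin.castAdd l i) (Fin.castAdd l j) * extPerm z w * swap (Fin.castAdd l i)
      (Fin.castAdd l j) = extPerm (swap i j * z * swap i j) w := by
  rw [swap_castAdd, ← extPerm_mul, ← extPerm_mul, one_mul, mul_one]

lemma IsFPF.extPerm {z : Perm (Fin m)} {w : Perm (Fin l)} (hz : IsFPF z) (hw : IsFPF w) :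
    IsFPF (extPerm z w) := by
  refine ⟨by rw [← extPerm_mul, hz.1, hw.1, extPerm_one], fun x => ?_⟩
  induction x using Fin.addCases <;> simp [hz.2, hw.2]

end ExtPerm

section Chain

variable {n : ℕ}

lemma swapAt_of_lt {N a : ℕ} (h : a + 1 < N) :
    swapAt N a = swap ⟨a, Nat.lt_of_succ_lt h⟩ ⟨a + 1, h⟩ :=
  dif_pos h

lemma val_cycleRange {N : ℕ} (i j : Fin N) :
    (Fin.cycleRange i j : ℕ) =
      if (j : ℕ) < i then (j : ℕ) + 1 else if (j : ℕ) = i then 0 else (j : ℕ) := by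
  rcases lt_trichotomy j i with h | rfl | h
  · simp [Fin.coe_cycleRange_of_lt h, Fin.lt_def.mp h]
  · simp [Fin.coe_cycleRange_of_le le_rfl]
  · simp [Fin.cycleRange_of_gt h, (Fin.lt_def.mp h).not_gt, (Fin.lt_def.mp h).ne']

lemma cycleRange_succ {N k : ℕ} (h : k + 1 < N) :
    Fin.cycleRange (⟨k + 1, h⟩ : Fin N) =
      Fin.cycleRange ⟨k, Nat.lt_of_succ_lt h⟩ * swap ⟨k, Nat.lt_of_succ_lt h⟩ ⟨k + 1, h⟩ := by
  ext x
  rw [Perm.mul_apply, val_cycleRange, val_cycleRange, swap_apply_def]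
  split_ifs <;> simp_all [Fin.ext_iff] <;> omega

def chainPerm (n : ℕ) : ℕ → Perm (Fin (n + 2))
  | 0 => revPerm (n + 2)
  | k + 1 => swapAt (n + 2) k * chainPerm n k * swapAt (n + 2) k

lemma chainPerm_eq_conj {k : ℕ} (hk : k < n + 2) :
    chainPerm n k = (Fin.cycleRange ⟨k, hk⟩)⁻¹ * revPerm (n + 2) * Fin.cycleRange ⟨k, hk⟩ := by
  induction k with
  | zero => simp [chainPerm]
  | succ k ih =>
    rw [chainPerm, ih (by omega), swapAt_of_lt hk, cycleRange_succ hk, mul_inv_rev, swap_inv]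
    group

lemma isFPF_chainPerm (hev : n % 2 = 0) {k : ℕ} (hk : k < n + 2) : IsFPF (chainPerm n k) := by
  rw [chainPerm_eq_conj hk]
  exact (isFPF_revPerm (by omega)).conj _

lemma chainPerm_apply_self {k : ℕ} (hk : k < n + 1) :
    chainPerm n k ⟨k, by omega⟩ = Fin.last (n + 1) := by
  rw [chainPerm_eq_conj (by omega), Perm.mul_apply, Perm.mul_apply, Fin.cycleRange_self,
    Perm.inv_eq_iff_eq, Fin.cycleRange_of_gt (by simp [Fin.lt_def]; omega)]
  rfl

lemma chainPerm_self : chainPerm n n = extPerm (revPerm n) (swap 0 1) := by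
  rw [chainPerm_eq_conj (by omega), mul_assoc, inv_mul_eq_iff_eq_mul]
  ext x
  induction x using Fin.addCases with
  | left a =>
    simp only [Perm.mul_apply, extPerm_castAdd, val_cycleRange, revPerm, coe_fn_mk, Fin.val_rev,
      Fin.val_castAdd]
    split_ifs <;> omega
  | right b =>
    fin_cases b <;> simp [Perm.mul_apply, val_cycleRange, revPerm]

end Chain

section ChainPoly

variable {n : ℕ}

def chainPairs (n k : ℕ) : Finset (Fin (n + 2) × Fin (n + 2)) :=
  Finset.univ.filter fun p => p.1 < p.2 ∧ ((p.1 : ℕ) + p.2 + 2 ≤ n ∨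
    ((p.1 : ℕ) + p.2 + 1 = n ∧ k ≤ p.2) ∨ ((p.1 : ℕ) + p.2 = n ∧ k ≤ p.1))

def chainPoly (n k : ℕ) : MvPolynomial (Fin (n + 2)) Rb :=
  ∏ p ∈ chainPairs n k, oplus p.1 p.2

lemma chainPoly_zero : chainPoly n 0 = spTop (n + 2) := by
  unfold chainPoly spTop chainPairs
  congr 1
  ext p
  simp only [Finset.mem_filter, Finset.mem_univ, true_and]
  omega

lemma chainPoly_self : chainPoly n n = rename (Fin.castAdd 2) (spTop n) := by
  have hlt : ∀ p ∈ chainPairs n n, (p.1 : ℕ) < n ∧ (p.2 : ℕ) < n := fun p hp => by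
    simp only [chainPairs, Finset.mem_filter, Finset.mem_univ, true_and, Fin.lt_def] at hp
    omega
  rw [chainPoly, spTop, map_prod]
  refine Finset.prod_bij' (fun p hp => (⟨p.1, (hlt p hp).1⟩, ⟨p.2, (hlt p hp).2⟩))
    (fun q _ => (Fin.castAdd 2 q.1, Fin.castAdd 2 q.2)) (fun p hp => ?_) (fun q hq => ?_)
    (fun _ _ => rfl) (fun _ _ => rfl) (fun p _ => by rw [rename_oplus]; rfl)
  · have hp' := hlt p hp
    simp only [chainPairs, Finset.mem_filter, Finset.mem_univ, true_and, Fin.lt_def] at hp ⊢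
    omega
  · simp only [chainPairs, Finset.mem_filter, Finset.mem_univ, true_and, Fin.lt_def,
      Fin.val_castAdd] at hq ⊢
    omega

lemma exists_chainPoly_eq_oplus_mul (hev : n % 2 = 0) {k : ℕ} (hk : k < n) :
    ∃ c : Fin (n + 2), (c : ℕ) ≠ k ∧ (c : ℕ) ≠ k + 1 ∧
      chainPoly n k = oplus c ⟨k, by omega⟩ * chainPoly n (k + 1) := by
  by_cases h : 2 * k < n
  · refine ⟨⟨n - k, by omega⟩, by simp; omega, by simp; omega, ?_⟩
    have hp : chainPairs n k =
        insert (⟨k, by omega⟩, ⟨n - k, by omega⟩) (chainPairs n (k + 1)) := by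
      ext q
      simp only [chainPairs, Finset.mem_filter, Finset.mem_univ, true_and, Finset.mem_insert,
        Fin.lt_def, Prod.ext_iff, Fin.ext_iff]
      omega
    rw [chainPoly, hp, Finset.prod_insert (by
      simp only [chainPairs, Finset.mem_filter, Finset.mem_univ, true_and, Fin.lt_def]; omega),
      chainPoly, oplus_comm]
  · refine ⟨⟨n - 1 - k, by omega⟩, by simp; omega, by simp; omega, ?_⟩
    have hp : chainPairs n k =
        insert (⟨n - 1 - k, by omega⟩, ⟨k, by omega⟩) (chainPairs n (k + 1)) := by
      ext q
      simp only [chainPairs, Finset.mem_filter, Finset.mem_univ, true_and, Finset.mem_insert,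
        Fin.lt_def, Prod.ext_iff, Fin.ext_iff]
      omega
    rw [chainPoly, hp, Finset.prod_insert (by
      simp only [chainPairs, Finset.mem_filter, Finset.mem_univ, true_and, Fin.lt_def]; omega),
      chainPoly]

lemma rename_swap_chainPoly {k : ℕ} (hk : k < n) :
    rename (swap (⟨k, by omega⟩ : Fin (n + 2)) ⟨k + 1, by omega⟩) (chainPoly n (k + 1)) =
      chainPoly n (k + 1) := by
  refine rename_prod_oplus_eq_self (swap_apply_self _ _) (fun p hp => ?_) fun p hp => ?_
  · simp only [chainPairs, Finset.mem_filter] at hp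
    exact hp.2.1
  · have h1 := val_swap_apply (⟨k, by omega⟩ : Fin (n + 2)) ⟨k + 1, by omega⟩ p.1
    have h2 := val_swap_apply (⟨k, by omega⟩ : Fin (n + 2)) ⟨k + 1, by omega⟩ p.2
    dsimp only at h1 h2
    simp only [chainPairs, Finset.mem_filter, Finset.mem_univ, true_and, Fin.lt_def] at hp
    unfold sortedImage
    split_ifs with h <;>
      simp only [chainPairs, Finset.mem_filter, Finset.mem_univ, true_and, Fin.lt_def] at h ⊢ <;>
      split_ifs at h1 h2 <;> omega

lemma isDivDiffB_chainPoly (hev : n % 2 = 0) {k : ℕ} (hk : k < n) :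
    IsDivDiffB ⟨k, by omega⟩ ⟨k + 1, by omega⟩ (chainPoly n k) (chainPoly n (k + 1)) := by
  obtain ⟨c, hck, hck', hc⟩ := exists_chainPoly_eq_oplus_mul hev hk
  rw [hc]
  exact isDivDiffB_oplus_mul (Fin.ne_of_val_ne hck) (Fin.ne_of_val_ne hck')
    (rename_swap_chainPoly hk)

end ChainPoly

section SpFamily

variable {n : ℕ} {G : Perm (Fin (n + 2)) → MvPolynomial (Fin (n + 2)) Rb}

lemma IsSpFam.apply_chainPerm (hG : IsSpFam (n + 2) G) (hev : n % 2 = 0) {k : ℕ} (hk : k ≤ n) :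
    G (chainPerm n k) = chainPoly n k := by
  induction k with
  | zero => exact hG.1.trans chainPoly_zero.symm
  | succ k ih =>
    set i : Fin (n + 2) := ⟨k, by omega⟩
    set j : Fin (n + 2) := ⟨k + 1, by omega⟩
    have hfpf := isFPF_chainPerm hev (k := k) (by omega)
    have hi : chainPerm n k i = Fin.last (n + 1) := chainPerm_apply_self (by omega)
    have h1 : chainPerm n k i ≠ j := by rw [hi]; simp [j, Fin.ext_iff]; omega
    have h2 : chainPerm n k j ≠ i := fun h => h1 (by rw [← h, hfpf.apply_apply])
    have h3 : chainPerm n k j < chainPerm n k i := by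
      rw [hi, Fin.lt_last_iff_ne_last, ← hi]
      exact (chainPerm n k).injective.ne (by simp [i, j])
    have hd := hG.2 _ hfpf i j rfl h1 h2 h3
    rw [ih (by omega)] at hd
    rw [chainPerm, swapAt_of_lt (by omega)]
    exact hd.unique (by simp [i, j, Fin.ext_iff]) (isDivDiffB_chainPoly hev (by omega))

lemma IsSpFam.apply_extPerm_revPerm (hG : IsSpFam (n + 2) G) (hev : n % 2 = 0) :
    G (extPerm (revPerm n) (swap 0 1)) = rename (Fin.castAdd 2) (spTop n) := by
  rw [← chainPerm_self, hG.apply_chainPerm hev le_rfl, chainPoly_self]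

lemma isFPF_swap_zero_one : IsFPF (swap (0 : Fin 2) 1) :=
  ⟨swap_mul_self 0 1, by decide⟩

lemma IsSpFam.isDivDiffB_extPerm (hG : IsSpFam (n + 2) G) {z : Perm (Fin n)} (hz : IsFPF z)
    {i j : Fin n} (hij : (j : ℕ) = i + 1) (h1 : z i ≠ j) (h2 : z j ≠ i) (h3 : z j < z i) :
    IsDivDiffB (Fin.castAdd 2 i) (Fin.castAdd 2 j) (G (extPerm z (swap 0 1)))
      (G (extPerm (swap i j * z * swap i j) (swap 0 1))) := by
  rw [← swap_castAdd_mul_extPerm_mul_swap_castAdd]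
  exact hG.2 _ (hz.extPerm isFPF_swap_zero_one) _ _ hij (by simpa using h1) (by simpa using h2)
    (by rw [extPerm_castAdd, extPerm_castAdd]; exact h3)

end SpFamily

theorem statement7_general (n : ℕ) (hev : n % 2 = 0)
    (G : Equiv.Perm (Fin n) → MvPolynomial (Fin n) Rb) (hG : IsSpFam n G)
    (G' : Equiv.Perm (Fin (n + 2)) → MvPolynomial (Fin (n + 2)) Rb)
    (hG' : IsSpFam (n + 2) G')
    (z : Equiv.Perm (Fin n)) (hz : IsFPF z) :
    G' (extPerm z (Equiv.swap (0 : Fin 2) 1)) =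
      rename (Fin.castLE (Nat.le_add_right n 2)) (G z) := by
  refine IsFPF.induction_on_descents (P := fun z =>
    G' (extPerm z (swap 0 1)) = rename (Fin.castAdd 2) (G z))
    ?_ (fun z hz i j hij h1 h2 h3 ih => ?_) hz
  · rw [hG.1, hG'.apply_extPerm_revPerm hev]
  · have hdiff := (hG.2 z hz i j hij h1 h2 h3).rename (Fin.castAdd_injective n 2)
    rw [← ih] at hdiff
    exact (hG'.isDivDiffB_extPerm hz hij h1 h2 h3).unique
      (by simpa [Fin.ext_iff] using (by omega : (i : ℕ) ≠ j)) hdiff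

theorem statement7 (n : ℕ) (hpos : 0 < n) (hev : n % 2 = 0)
    (G : Equiv.Perm (Fin n) → MvPolynomial (Fin n) Rb) (hG : IsSpFam n G)
    (G' : Equiv.Perm (Fin (n + 2)) → MvPolynomial (Fin (n + 2)) Rb)
    (hG' : IsSpFam (n + 2) G')
    (z : Equiv.Perm (Fin n)) (hz : IsFPF z) :
    G' (extPerm z (Equiv.swap (0 : Fin 2) 1)) =
      rename (Fin.castLE (Nat.le_add_right n 2)) (G z) :=
  statement7_general n hev G hG G' hG' z hz

end
end

section
/- Let n be a positive even integer and z ∈ I^FPF_n. Then MX^Sp_z = {A ∈ Mat^Sp_n : rank(A_{[i][j]}) ≤ rank(z_{[i][j]}) for all (i,j) ∈ Ess(D^Sp(z))}; that is, a skew-symmetric n×n complex matrix A satisfies rank(A_{[i][j]}) ≤ rank(z_{[i][j]}) for all i,j ∈ [n] if and only if it satisfies these inequalities for all (i,j) in the essential set Ess(D^Sp(z)). -/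
open MvPolynomial

noncomputable section

/-! Write `r(i, j)` and `r_z(i, j)` for the ranks of the upper-left `i × j` corners of `A` and
of `z`. Adding a row or a column raises `r` by at most one and `r_z` by zero or one. Both are
symmetric in `(i, j)` and even on the diagonal: `z` pairs off the `k ≤ i` with `z(k) ≤ i`, and a
skew-symmetric matrix induces a nondegenerate skew form on a complement of its kernel, whose
Gram matrix `G` of size `d` satisfies `det G = (-1)^d det G`.

Induct on `i + j`. If `z(j) ≤ i` (or `z(i) ≤ j`), then `r_z` gains one over the corner
`(i, j - 1)` (or `(i - 1, j)`) and the bound there carries over. On the diagonal with `z(i) > i`,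
`r_z(i, i) = r_z(i, i - 1)` and parity absorbs the possible gain of one in `r`. Otherwise `(i, j)`
or `(j, i)` is a cell of `D^Sp(z)`. Inside `D^Sp(z)`, `r_z` is constant along steps to the right
or down while `r` can only grow, so the bound spreads from the essential cells to the diagram. -/

namespace Matrix

variable {m n : Type*} [Fintype n]

theorem rank_neg {R : Type*} [CommRing R] (M : Matrix m n R) : (-M).rank = M.rank := by
  have h : (-M).mulVecLin = -M.mulVecLin := LinearMap.ext fun v => neg_mulVec v M
  rw [rank, rank, h, LinearMap.range_neg]

variable {K : Type*} [Field K]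

theorem even_card_of_transpose_eq_neg_of_det_ne_zero (hK : ringChar K ≠ 2) [DecidableEq n]
    {A : Matrix n n K} (hA : Aᵀ = -A) (hdet : A.det ≠ 0) : Even (Fintype.card n) := by
  have h : (-1 : K) ^ Fintype.card n * A.det = 1 * A.det := by
    rw [← det_neg, ← hA, det_transpose, one_mul]
  exact (neg_one_pow_eq_one_iff_even (Ring.neg_one_ne_one_of_char_ne_two hK)).1
    (mul_right_cancel₀ hdet h)

theorem rank_le_rank_submatrix_add_one [Fintype m] {n' : Type*} [Fintype n'] (M : Matrix m n K)
    (c : n' → n) (hc : (Set.range c)ᶜ.Subsingleton) :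
    M.rank ≤ (M.submatrix id c).rank + 1 := by
  rw [rank_eq_finrank_span_cols, rank_eq_finrank_span_cols]
  have hcover : Submodule.span K (Set.range M.col) ≤
      Submodule.span K (Set.range (M.submatrix id c).col) ⊔
        Submodule.span K (M.col '' (Set.range c)ᶜ) := by
    rw [Submodule.span_le]
    rintro - ⟨k, rfl⟩
    by_cases hk : k ∈ Set.range c
    · obtain ⟨k', rfl⟩ := hk
      exact Submodule.mem_sup_left (Submodule.subset_span ⟨k', rfl⟩)
    · exact Submodule.mem_sup_right (Submodule.subset_span ⟨k, hk, rfl⟩)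
  have hone : Module.finrank K (Submodule.span K (M.col '' (Set.range c)ᶜ)) ≤ 1 := by
    rcases (hc.image M.col).eq_empty_or_singleton with h | ⟨v, h⟩
    · rw [h, Submodule.span_empty, finrank_bot]
      exact zero_le_one
    · rw [h]
      exact (finrank_span_le_card ({v} : Set (m → K))).trans (by simp)
  calc _ ≤ _ := Submodule.finrank_mono hcover
    _ ≤ _ := Submodule.finrank_add_le_finrank_add_finrank _ _
    _ ≤ _ := by gcongr

theorem even_rank_of_transpose_eq_neg (hK : ringChar K ≠ 2) [DecidableEq n] {A : Matrix n n K}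
    (hA : Aᵀ = -A) : Even A.rank := by
  set B := toBilin' A
  have hB : ∀ x y, B x y = x ⬝ᵥ A *ᵥ y := toBilin'_apply' A
  have hskew : ∀ x y, B y x = -B x y := fun x y => by
    rw [hB, hB, dotProduct_mulVec, ← mulVec_transpose, hA, neg_mulVec, neg_dotProduct,
      dotProduct_comm]
  have hrefl : B.IsRefl := fun x y h => by rw [hskew, h, neg_zero]
  obtain ⟨W, hW⟩ := (LinearMap.ker A.mulVecLin).exists_isCompl
  have hdisj : Disjoint W (B.orthogonal W) := by
    rw [Submodule.disjoint_def]
    intro v hvW hvorth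
    suffices hv : v ∈ LinearMap.ker A.mulVecLin from
      (Submodule.disjoint_def.1 hW.disjoint) v hv hvW
    have hBv : ∀ u, B u v = 0 := fun u => by
      have hu : u ∈ LinearMap.ker A.mulVecLin ⊔ W := hW.sup_eq_top ▸ Submodule.mem_top
      obtain ⟨k, hk, w, hw, rfl⟩ := Submodule.mem_sup.1 hu
      have hk' : A *ᵥ k = 0 := hk
      rw [map_add, LinearMap.add_apply, hskew, hB v, hk', dotProduct_zero, neg_zero, zero_add]
      exact hvorth w hw
    ext i
    simpa [hB] using hBv (Pi.single i 1)
  have hnd := B.nondegenerate_restrict_of_disjoint_orthogonal hrefl hdisj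
  let b := Module.finBasis K W
  have hgram := even_card_of_transpose_eq_neg_of_det_ne_zero hK
    (A := LinearMap.toMatrix₂ b b (B.restrict W))
    (by
      ext i j
      rw [transpose_apply, neg_apply, LinearMap.toMatrix₂_apply, LinearMap.toMatrix₂_apply]
      exact hskew _ _)
    ((LinearMap.BilinForm.nondegenerate_iff_det_ne_zero b).1 hnd)
  have hrank : A.rank = Module.finrank K W := by
    have h1 := Submodule.finrank_add_eq_of_isCompl hW
    have h2 := LinearMap.finrank_range_add_finrank_ker A.mulVecLin
    rw [rank]
    omega
  rwa [hrank, ← Fintype.card_fin (Module.finrank K W)]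

end Matrix

section CornerRank

open Matrix

variable {n : ℕ} (A : Matrix (Fin n) (Fin n) ℂ)

theorem cornerRank_eq_rank_submatrix (i j : ℕ) :
    cornerRank A i j =
      (A.submatrix (Fin.castLE (min_le_right i n)) (Fin.castLE (min_le_right j n))).rank :=
  rfl

theorem cornerRank_le_right (i j : ℕ) : cornerRank A i j ≤ j :=
  (rank_le_width _).trans (min_le_left j n)

theorem cornerRank_mono {i j i' j' : ℕ} (hi : i ≤ i') (hj : j ≤ j') :
    cornerRank A i j ≤ cornerRank A i' j' := by
  have hcorner : cornerRank A i j = ((A.submatrix (Fin.castLE (min_le_right i' n))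
      (Fin.castLE (min_le_right j' n))).submatrix (Fin.castLE (min_le_min_right n hi))
        (Fin.castLE (min_le_min_right n hj))).rank := rfl
  exact hcorner ▸ rank_submatrix_le _ _ _

theorem cornerRank_transpose (i j : ℕ) : cornerRank Aᵀ j i = cornerRank A i j := by
  rw [cornerRank_eq_rank_submatrix, cornerRank_eq_rank_submatrix, ← transpose_submatrix,
    rank_transpose]

theorem cornerRank_neg (i j : ℕ) : cornerRank (-A) i j = cornerRank A i j := by
  rw [cornerRank_eq_rank_submatrix, cornerRank_eq_rank_submatrix, submatrix_neg,
    Pi.neg_apply, Pi.neg_apply, rank_neg]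

theorem cornerRank_comm_of_transpose_eq_neg (hA : Aᵀ = -A) (i j : ℕ) :
    cornerRank A i j = cornerRank A j i := by
  rw [← cornerRank_transpose, hA, cornerRank_neg]

theorem cornerRank_succ_right_le (i j : ℕ) : cornerRank A i (j + 1) ≤ cornerRank A i j + 1 := by
  refine rank_le_rank_submatrix_add_one _ (Fin.castLE (min_le_min_right n j.le_succ)) ?_
  have hmiss : ∀ l ∉ Set.range (Fin.castLE (min_le_min_right n j.le_succ)), (l : ℕ) = j :=
    fun l hl => by
      by_contra hne
      exact hl ⟨⟨l, by omega⟩, rfl⟩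
  exact fun k hk k' hk' => Fin.ext ((hmiss k hk).trans (hmiss k' hk').symm)

theorem cornerRank_succ_left_le (i j : ℕ) : cornerRank A (i + 1) j ≤ cornerRank A i j + 1 := by
  simpa only [cornerRank_transpose] using cornerRank_succ_right_le Aᵀ j i

theorem even_cornerRank_self (hA : Aᵀ = -A) (i : ℕ) : Even (cornerRank A i i) := by
  rw [cornerRank_eq_rank_submatrix]
  refine even_rank_of_transpose_eq_neg (by simp) ?_
  rw [transpose_submatrix, hA, submatrix_neg, Pi.neg_apply, Pi.neg_apply]

end CornerRank

theorem IsFPF.involutive {n : ℕ} {z : Equiv.Perm (Fin n)} (hz : IsFPF z) :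
    Function.Involutive z := fun k => by
  rw [← Equiv.Perm.mul_apply, hz.1, Equiv.Perm.one_apply]

section PermRank

variable {n : ℕ} {z : Equiv.Perm (Fin n)}

theorem permRank_succ_right (i : ℕ) (c : Fin n) :
    permRank z i (c + 1) = permRank z i c + if (z c : ℕ) < i then 1 else 0 := by
  have hsplit : Finset.univ.filter (fun k : Fin n => (k : ℕ) < c + 1 ∧ (z k : ℕ) < i) =
      Finset.univ.filter (fun k : Fin n => (k : ℕ) < c ∧ (z k : ℕ) < i) ∪
        Finset.univ.filter (fun k => k = c ∧ (z k : ℕ) < i) := by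
    ext k
    simp only [Finset.mem_filter, Finset.mem_univ, true_and, Finset.mem_union, Fin.ext_iff]
    omega
  rw [permRank, permRank, hsplit, Finset.card_union_of_disjoint]
  · split_ifs with h <;> simp [Finset.filter_and, Finset.filter_eq', h]
  · exact Finset.disjoint_filter.2 fun k _ hk hk' => by omega

theorem permRank_comm (hz : Function.Involutive z) (i j : ℕ) :
    permRank z i j = permRank z j i :=
  Finset.card_nbij' z z (by intro k; simp [hz k]; omega) (by intro k; simp [hz k]; omega)
    (fun k _ => hz k) (fun k _ => hz k)

theorem permRank_succ_left (hz : Function.Involutive z) (r : Fin n) (j : ℕ) :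
    permRank z (r + 1) j = permRank z r j + if (z r : ℕ) < j then 1 else 0 := by
  rw [permRank_comm hz, permRank_succ_right, permRank_comm hz]

theorem even_permRank_self (hz : IsFPF z) (i : ℕ) : Even (permRank z i i) := by
  have hinv := hz.involutive
  let σ := z.subtypePerm (p := fun k : Fin n => (k : ℕ) < i ∧ (z k : ℕ) < i)
    (fun k => by rw [hinv k, and_comm])
  have hσ : σ ^ 2 = 1 := Equiv.ext fun k => Subtype.ext (hinv k)
  have hsupp : σ.support = Finset.univ :=
    Finset.eq_univ_of_forall fun k =>
      Equiv.Perm.mem_support.2 fun h => hz.2 k (congrArg Subtype.val h)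
  rw [even_iff_two_dvd, permRank, ← Fintype.card_subtype, ← Finset.card_univ, ← hsupp]
  exact Equiv.Perm.two_dvd_card_support hσ

end PermRank

theorem mem_DSp {n : ℕ} {z : Equiv.Perm (Fin n)} (hz : Function.Involutive z) {a b : Fin n} :
    (a, b) ∈ DSp n z ↔ b < z a ∧ b < a ∧ a < z b := by
  simp only [DSp, Finset.mem_image, Finset.mem_filter, Finset.mem_univ, true_and, Prod.mk.injEq]
  constructor
  · rintro ⟨⟨a, c⟩, ⟨h1, h2, h3⟩, rfl, rfl⟩
    exact ⟨h1, h2, by rwa [hz c]⟩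
  · rintro ⟨h1, h2, h3⟩
    exact ⟨(a, z b), by rw [hz b]; exact ⟨⟨h1, h2, h3⟩, rfl, rfl⟩⟩

theorem forall_mem_of_forall_mem_ess {n : ℕ} {D : Finset (Fin n × Fin n)}
    {P : Fin n × Fin n → Prop} (hess : ∀ p ∈ Ess D, P p)
    (hright : ∀ p ∈ D, ∀ q ∈ D, q.1 = p.1 → (q.2 : ℕ) = p.2 + 1 → P q → P p)
    (hdown : ∀ p ∈ D, ∀ q ∈ D, (q.1 : ℕ) = p.1 + 1 → q.2 = p.2 → P q → P p) :
    ∀ p ∈ D, P p := by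
  intro p hp
  induction hk : 2 * n - (p.1 + p.2 : ℕ) using Nat.strong_induction_on generalizing p with
  | _ k ih =>
  by_cases hpe : p ∈ Ess D
  · exact hess p hpe
  obtain ⟨q, hq, h1, h2⟩ | ⟨q, hq, h1, h2⟩ : (∃ q ∈ D, q.1 = p.1 ∧ (q.2 : ℕ) = p.2 + 1) ∨
      (∃ q ∈ D, (q.1 : ℕ) = p.1 + 1 ∧ q.2 = p.2) := by
    simp only [Ess, Finset.mem_filter, hp, true_and] at hpe
    grind
  · exact hright p hp q hq h1 h2 (ih _ (by omega) q hq rfl)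
  · exact hdown p hp q hq h1 h2 (ih _ (by omega) q hq rfl)

section RankConditions

open Matrix

variable {n : ℕ} {z : Equiv.Perm (Fin n)} (A : Matrix (Fin n) (Fin n) ℂ)

theorem cornerRank_succ_right_le_permRank {i : ℕ} {c : Fin n}
    (h : cornerRank A i c ≤ permRank z i c) (hc : (z c : ℕ) < i) :
    cornerRank A i (c + 1) ≤ permRank z i (c + 1) := by
  rw [permRank_succ_right, if_pos hc]
  exact (cornerRank_succ_right_le A i c).trans (by omega)

theorem cornerRank_succ_left_le_permRank (hz : Function.Involutive z) {r : Fin n} {j : ℕ}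
    (h : cornerRank A r j ≤ permRank z r j) (hr : (z r : ℕ) < j) :
    cornerRank A (r + 1) j ≤ permRank z (r + 1) j := by
  rw [permRank_succ_left hz, if_pos hr]
  exact (cornerRank_succ_left_le A r j).trans (by omega)

theorem cornerRank_succ_self_le_permRank (hz : IsFPF z) (hA : Aᵀ = -A) {c : Fin n}
    (h : cornerRank A (c + 1) c ≤ permRank z (c + 1) c) (hc : ¬(z c : ℕ) < c + 1) :
    cornerRank A (c + 1) (c + 1) ≤ permRank z (c + 1) (c + 1) := by
  have hstep := cornerRank_succ_right_le A (c + 1) c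
  have hperm : permRank z (c + 1) (c + 1) = permRank z (c + 1) c := by
    rw [permRank_succ_right, if_neg hc, add_zero]
  obtain ⟨u, hu⟩ := even_cornerRank_self A hA (c + 1)
  obtain ⟨v, hv⟩ := even_permRank_self hz (c + 1)
  omega

theorem cornerRank_le_permRank_of_mem_DSp (hz : Function.Involutive z)
    (H : ∀ p ∈ Ess (DSp n z),
      cornerRank A (p.1 + 1) (p.2 + 1) ≤ permRank z (p.1 + 1) (p.2 + 1)) :
    ∀ p ∈ DSp n z, cornerRank A (p.1 + 1) (p.2 + 1) ≤ permRank z (p.1 + 1) (p.2 + 1) := by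
  refine forall_mem_of_forall_mem_ess H ?_ ?_
  · rintro ⟨a, b⟩ - ⟨a', c⟩ hq ha hc hPq
    dsimp only at ha hc hPq ⊢
    subst a'
    have hac : (a : ℕ) < z c := ((mem_DSp hz).1 hq).2.2
    calc cornerRank A (a + 1) (b + 1) ≤ cornerRank A (a + 1) (c + 1) :=
          cornerRank_mono A le_rfl (by omega)
      _ ≤ permRank z (a + 1) (c + 1) := hPq
      _ = permRank z (a + 1) (b + 1) := by
          rw [permRank_succ_right, if_neg (by omega), add_zero, hc]
  · rintro ⟨a, b⟩ - ⟨c, b'⟩ hq hc hb hPq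
    dsimp only at hb hc hPq ⊢
    subst b'
    have hbc : (b : ℕ) < z c := ((mem_DSp hz).1 hq).1
    calc cornerRank A (a + 1) (b + 1) ≤ cornerRank A (c + 1) (b + 1) :=
          cornerRank_mono A (by omega) le_rfl
      _ ≤ permRank z (c + 1) (b + 1) := hPq
      _ = permRank z (a + 1) (b + 1) := by
          rw [permRank_succ_left hz, if_neg (by omega), add_zero, hc]

theorem cornerRank_le_permRank_of_ess (hz : IsFPF z) (hA : Aᵀ = -A)
    (H : ∀ p ∈ Ess (DSp n z),
      cornerRank A (p.1 + 1) (p.2 + 1) ≤ permRank z (p.1 + 1) (p.2 + 1))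
    {i j : ℕ} (hi : i ≤ n) (hj : j ≤ n) : cornerRank A i j ≤ permRank z i j := by
  have hinv := hz.involutive
  have hD := cornerRank_le_permRank_of_mem_DSp A hinv H
  induction hs : i + j using Nat.strong_induction_on generalizing i j with
  | _ s ih =>
  obtain _ | a := i
  · rw [cornerRank_comm_of_transpose_eq_neg A hA]
    exact (cornerRank_le_right A j 0).trans (Nat.zero_le _)
  obtain _ | b := j
  · exact (cornerRank_le_right A (a + 1) 0).trans (Nat.zero_le _)
  obtain ⟨a, rfl⟩ : ∃ a' : Fin n, (a' : ℕ) = a := ⟨⟨a, hi⟩, rfl⟩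
  obtain ⟨b, rfl⟩ : ∃ b' : Fin n, (b' : ℕ) = b := ⟨⟨b, hj⟩, rfl⟩
  by_cases hcol : (z b : ℕ) < a + 1
  · exact cornerRank_succ_right_le_permRank A (ih (a + 1 + b) (by omega) hi b.isLt.le rfl) hcol
  by_cases hrow : (z a : ℕ) < b + 1
  · exact cornerRank_succ_left_le_permRank A hinv
      (ih (a + (b + 1)) (by omega) a.isLt.le hj rfl) hrow
  rcases lt_trichotomy a b with hab | rfl | hab
  · rw [cornerRank_comm_of_transpose_eq_neg A hA, permRank_comm hinv]
    exact hD (b, a) ((mem_DSp hinv).2 ⟨Fin.lt_def.2 (by omega), hab, Fin.lt_def.2 (by omega)⟩)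
  · exact cornerRank_succ_self_le_permRank A hz hA
      (ih (a + 1 + a) (by omega) hi a.isLt.le rfl) hcol
  · exact hD (a, b) ((mem_DSp hinv).2 ⟨Fin.lt_def.2 (by omega), hab, Fin.lt_def.2 (by omega)⟩)

end RankConditions

theorem statement11_general (n : ℕ)
    (z : Equiv.Perm (Fin n)) (hz : IsFPF z)
    (A : Matrix (Fin n) (Fin n) ℂ) (hA : A.transpose = -A) :
    (∀ i j : ℕ, i ≤ n → j ≤ n → cornerRank A i j ≤ permRank z i j) ↔
      ∀ p ∈ Ess (DSp n z),
        cornerRank A ((p.1 : ℕ) + 1) ((p.2 : ℕ) + 1) ≤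
          permRank z ((p.1 : ℕ) + 1) ((p.2 : ℕ) + 1) :=
  ⟨fun h p _ => h _ _ p.1.isLt p.2.isLt,
    fun H _ _ hi hj => cornerRank_le_permRank_of_ess A hz hA H hi hj⟩

theorem statement11 (n : ℕ) (hpos : 0 < n) (hev : n % 2 = 0)
    (z : Equiv.Perm (Fin n)) (hz : IsFPF z)
    (A : Matrix (Fin n) (Fin n) ℂ) (hA : A.transpose = -A) :
    (∀ i j : ℕ, i ≤ n → j ≤ n → cornerRank A i j ≤ permRank z i j) ↔
      ∀ p ∈ Ess (DSp n z),
        cornerRank A ((p.1 : ℕ) + 1) ((p.2 : ℕ) + 1) ≤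
          permRank z ((p.1 : ℕ) + 1) ((p.2 : ℕ) + 1) :=
  statement11_general n z hz A hA
end
end
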